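/- arXiv:1005.0751 — 3 statements merged into one kernel-verified Lean document; each statement's English description precedes it below -/
import Mathlib

section
/- If f is a real-valued function defined on a neighborhood of x₀ that is asymptotically equal to μ_F at x₀, then f is differentially equivalent to μ_F at x₀, i.e. |f(x) − μ_F(x)|/‖x − x₀‖ → 0 as x → x₀. -/
open Filter Topology Set

/-- The partial Fréchet derivative of `F` with respect to the first variable. -/
noncomputable def D1 {E X P : Type*}
    [NormedAddCommGroup E] [NormedSpace ℝ E]
    [NormedAddCommGroup X] [NormedSpace ℝ X]
    [NormedAddCommGroup P] [NormedSpace ℝ P]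
    (F : E × X → P) (y : E) (x : X) : E →L[ℝ] P :=
  fderiv ℝ (fun y' => F (y', x)) y

/-- `f` and `g` are asymptotically equal at `x₀`: for every `ε > 0` there is a
neighborhood of `x₀` on which `(1 − ε)·g(x) ≤ f(x) ≤ (1 + ε)·g(x)`. -/
def AsympEq {X : Type*} [TopologicalSpace X] (x₀ : X) (f g : X → ℝ) : Prop :=
  ∀ ε > (0 : ℝ), ∃ N ∈ 𝓝 x₀, ∀ x ∈ N, (1 - ε) * g x ≤ f x ∧ f x ≤ (1 + ε) * g x

/-- `f` and `g` are differentially equivalent at `x₀`: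
`‖f(x) − g(x)‖ / ‖x − x₀‖ → 0` as `x → x₀`. -/
def DiffEquiv {X : Type*} [NormedAddCommGroup X] (x₀ : X) (f g : X → ℝ) : Prop :=
  Tendsto (fun x => |f x - g x| / ‖x - x₀‖) (𝓝[≠] x₀) (𝓝 0)

/-! Since `D₁F (y₀, x₀)` is onto, the derivative of `G (y, x) = (F (y, x), x)` is onto as well,
so the implicit function theorem for `G` yields `φ` with `F (φ x, x) = 0` near `x₀` and
`φ x - y₀ = O(x - x₀)`. Hence `0 ≤ μ_F x ≤ ‖φ x - y₀‖ = O(‖x - x₀‖)`. Asymptotic equality says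
`|f - μ_F| ≤ ε μ_F` near `x₀` for every `ε > 0`, i.e. `f - μ_F = o(μ_F)`, which is therefore
`o(‖x - x₀‖)`. -/

namespace HasStrictFDerivAt

variable {𝕜 : Type*} [NontriviallyNormedField 𝕜] [CompleteSpace 𝕜]
  {E : Type*} [NormedAddCommGroup E] [NormedSpace 𝕜 E] [CompleteSpace E]
  {F : Type*} [NormedAddCommGroup F] [NormedSpace 𝕜 F] [FiniteDimensional 𝕜 F]
  {f : E → F} {f' : E →L[𝕜] F} {a : E}

theorem exists_hasStrictFDerivAt_implicitFunction (hf : HasStrictFDerivAt f f' a)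
    (hf' : f'.range = ⊤) : ∃ L : F × f'.ker →L[𝕜] E,
      HasStrictFDerivAt (fun p => hf.implicitFunction f f' hf' p.1 p.2) L (f a, 0) := by
  have := FiniteDimensional.complete 𝕜 F
  set φ := implicitFunctionDataOfComplemented f f' hf hf'
    f'.ker_closedComplemented_of_finiteDimensional_range
  have hpt : φ.prodFun φ.pt = (f a, 0) := by simp [φ]
  rw [← hpt]
  exact ⟨_, φ.hasStrictFDerivAt.to_localInverse⟩

theorem isBigO_implicitFunction_sub (hf : HasStrictFDerivAt f f' a) (hf' : f'.range = ⊤) :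
    (fun p : F × f'.ker => hf.implicitFunction f f' hf' p.1 p.2 - a) =O[𝓝 (f a, 0)]
      fun p => p - (f a, 0) := by
  obtain ⟨L, hL⟩ := hf.exists_hasStrictFDerivAt_implicitFunction hf'
  simpa using hL.hasFDerivAt.isBigO_sub

end HasStrictFDerivAt

theorem ContinuousLinearMap.range_prod_snd_eq_top {𝕜 E X P : Type*} [Semiring 𝕜]
    [TopologicalSpace E] [AddCommGroup E] [Module 𝕜 E]
    [TopologicalSpace X] [AddCommGroup X] [Module 𝕜 X]
    [TopologicalSpace P] [AddCommGroup P] [Module 𝕜 P] {F' : E × X →L[𝕜] P}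
    (hsurj : Function.Surjective (F' ∘L .inl 𝕜 E X)) :
    (F'.prod (.snd 𝕜 E X)).range = ⊤ := by
  refine LinearMap.range_eq_top.mpr fun ⟨p, x⟩ => ?_
  obtain ⟨y, hy⟩ := hsurj (p - F' (0, x))
  refine ⟨(y, x), Prod.ext ?_ rfl⟩
  have hsplit : F' (y, x) = F' (y, 0) + F' (0, x) := by
    rw [← map_add, Prod.mk_add_mk, add_zero, zero_add]
  simp_all

theorem HasStrictFDerivAt.exists_isBigO_of_surjective_comp_inl
    {𝕜 : Type*} [NontriviallyNormedField 𝕜] [CompleteSpace 𝕜]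
    {E : Type*} [NormedAddCommGroup E] [NormedSpace 𝕜 E] [CompleteSpace E]
    {X : Type*} [NormedAddCommGroup X] [NormedSpace 𝕜 X] [FiniteDimensional 𝕜 X]
    {P : Type*} [NormedAddCommGroup P] [NormedSpace 𝕜 P] [FiniteDimensional 𝕜 P] {F : E × X → P}
    {F' : E × X →L[𝕜] P} {y₀ : E} {x₀ : X} (hF : HasStrictFDerivAt F F' (y₀, x₀))
    (hsurj : Function.Surjective (F' ∘L .inl 𝕜 E X)) :
    ∃ φ : X → E, (∀ᶠ x in 𝓝 x₀, F (φ x, x) = F (y₀, x₀)) ∧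
      (fun x => φ x - y₀) =O[𝓝 x₀] fun x => x - x₀ := by
  have := FiniteDimensional.complete 𝕜 X
  set G : E × X → P × X := fun z => (F z, z.2)
  have hG : HasStrictFDerivAt G (F'.prod (.snd 𝕜 E X)) (y₀, x₀) :=
    hF.prodMk hasStrictFDerivAt_snd
  have hG' := ContinuousLinearMap.range_prod_snd_eq_top hsurj
  set ψ := hG.implicitFunction G _ hG'
  -- `ψ (c, x) k` solves `G z = (c, x)` for every small `k`; the choice `k = 0` picks one solution.
  set θ : X → (P × X) × (F'.prod (.snd 𝕜 E X)).ker := fun x => ((F (y₀, x₀), x), 0)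
  have hθ : Tendsto θ (𝓝 x₀) (𝓝 (G (y₀, x₀), 0)) :=
    ((continuous_const.prodMk continuous_id).prodMk continuous_const).tendsto x₀
  have hθO : (fun x => θ x - (G (y₀, x₀), 0)) =O[𝓝 x₀] fun x => x - x₀ :=
    Asymptotics.isBigO_of_le _ fun x => by
      simp only [θ, G, Prod.mk_sub_mk, sub_self, Prod.norm_def, norm_zero]
      simp
  refine ⟨fun x => (ψ (θ x).1 (θ x).2).1, ?_, ?_⟩
  · filter_upwards [hθ.eventually (hG.map_implicitFunction_eq hG')] with x hx
    have hz : ((ψ (θ x).1 (θ x).2).1, x) = ψ (θ x).1 (θ x).2 :=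
      Prod.ext rfl (congrArg Prod.snd hx).symm
    rw [hz]
    exact congrArg Prod.fst hx
  · have hfst : (fun x => (ψ (θ x).1 (θ x).2).1 - y₀) =O[𝓝 x₀]
        fun x => ψ (θ x).1 (θ x).2 - (y₀, x₀) :=
      Asymptotics.isBigO_of_le _ fun x => norm_fst_le (ψ (θ x).1 (θ x).2 - (y₀, x₀))
    exact hfst.trans (((hG.isBigO_implicitFunction_sub hG').comp_tendsto hθ).trans hθO)

theorem D1_eq_comp_inl {E X P : Type*}
    [NormedAddCommGroup E] [NormedSpace ℝ E]
    [NormedAddCommGroup X] [NormedSpace ℝ X]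
    [NormedAddCommGroup P] [NormedSpace ℝ P]
    {F : E × X → P} {F' : E × X →L[ℝ] P} {y : E} {x : X} (hF : HasFDerivAt F F' (y, x)) :
    D1 F y x = F' ∘L .inl ℝ E X :=
  (hF.comp y (hasFDerivAt_prodMk_left y x)).fderiv

theorem isBigO_of_isLeast_norm_sub {E X P : Type*}
    [NormedAddCommGroup E] [NormedAddCommGroup X]
    {D : Set (E × X)} {y₀ : E} {x₀ : X} (hD : D ∈ 𝓝 (y₀, x₀)) {F : E × X → P} {c : P}
    {φ : X → E} (hφF : ∀ᶠ x in 𝓝 x₀, F (φ x, x) = c)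
    (hφ : (fun x => φ x - y₀) =O[𝓝 x₀] fun x => x - x₀) {μ : X → ℝ}
    (hμ : ∀ᶠ x in 𝓝 x₀,
      IsLeast {r : ℝ | ∃ y : E, (y, x) ∈ D ∧ F (y, x) = c ∧ r = ‖y - y₀‖} (μ x)) :
    μ =O[𝓝 x₀] fun x => x - x₀ := by
  have hφy₀ : Tendsto φ (𝓝 x₀) (𝓝 y₀) :=
    tendsto_sub_nhds_zero_iff.mp (hφ.trans_tendsto (tendsto_sub_nhds_zero_iff.mpr tendsto_id))
  have hφD : ∀ᶠ x in 𝓝 x₀, (φ x, x) ∈ D :=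
    (hφy₀.prodMk_nhds tendsto_id).eventually_mem hD
  refine Asymptotics.IsBigO.trans ?_ hφ
  refine Asymptotics.IsBigO.of_bound 1 ?_
  filter_upwards [hφF, hφD, hμ] with x hxF hxD hxμ
  obtain ⟨y, -, -, hy⟩ := hxμ.1
  rw [one_mul, Real.norm_of_nonneg (hy ▸ norm_nonneg _)]
  exact hxμ.2 ⟨φ x, hxD, hxF, rfl⟩

theorem AsympEq.isLittleO_sub {X : Type*} [TopologicalSpace X] {x₀ : X} {f g : X → ℝ}
    (h : AsympEq x₀ f g) : (f - g) =o[𝓝 x₀] g := by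
  refine Asymptotics.isLittleO_iff.mpr fun ε hε => ?_
  obtain ⟨N, hN, hfg⟩ := h ε hε
  filter_upwards [hN] with x hx
  obtain ⟨hlo, hhi⟩ := hfg x hx
  have hg : 0 ≤ g x := (mul_nonneg_iff_of_pos_left hε).mp (by linarith)
  rw [Pi.sub_apply, Real.norm_eq_abs, Real.norm_eq_abs, abs_of_nonneg hg, abs_sub_le_iff]
  constructor <;> linarith

theorem diffEquiv_of_isLittleO {X : Type*} [NormedAddCommGroup X] {x₀ : X} {f g : X → ℝ}
    (h : (f - g) =o[𝓝 x₀] fun x => x - x₀) : DiffEquiv x₀ f g := by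
  have := (h.norm_norm.tendsto_div_nhds_zero).mono_left (nhdsWithin_le_nhds (s := {x₀}ᶜ))
  simpa [DiffEquiv, Real.norm_eq_abs] using this

/-- If `f` is asymptotically equal to `μ_F` at `x₀`, then `f` is differentially
equivalent to `μ_F` at `x₀`. -/
theorem stmt_2 {E X P : Type*}
    [NormedAddCommGroup E] [NormedSpace ℝ E] [FiniteDimensional ℝ E]
    [NormedAddCommGroup X] [NormedSpace ℝ X] [FiniteDimensional ℝ X]
    [NormedAddCommGroup P] [NormedSpace ℝ P] [FiniteDimensional ℝ P]
    (D : Set (E × X)) (hD : IsOpen D) (y₀ : E) (x₀ : X) (hmem : (y₀, x₀) ∈ D)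
    (F : E × X → P) (hF : ContDiffOn ℝ 1 F D) (hF0 : F (y₀, x₀) = 0)
    (hsurj : Function.Surjective (D1 F y₀ x₀))
    (μF : X → ℝ)
    (hμ : ∃ N ∈ 𝓝 x₀, ∀ x ∈ N,
      IsLeast {r : ℝ | ∃ y : E, (y, x) ∈ D ∧ F (y, x) = 0 ∧ r = ‖y - y₀‖} (μF x))
    (f : X → ℝ) (hf : AsympEq x₀ f μF) :
    DiffEquiv x₀ f μF := by
  have hDnhds : D ∈ 𝓝 (y₀, x₀) := hD.mem_nhds hmem
  have hFs := (hF.contDiffAt hDnhds).hasStrictFDerivAt one_ne_zero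
  rw [D1_eq_comp_inl hFs.hasFDerivAt] at hsurj
  obtain ⟨φ, hφF, hφ⟩ := hFs.exists_isBigO_of_surjective_comp_inl hsurj
  rw [hF0] at hφF
  have hμO := isBigO_of_isLeast_norm_sub hDnhds hφF hφ (eventually_iff_exists_mem.mpr hμ)
  exact diffEquiv_of_isLittleO (hf.isLittleO_sub.trans_isBigO hμO)
end

section
/- (Uniformly colocated level sets, part 2) For every ε > 0 there exist a radius r > 0 and a neighborhood N of x₀ such that the closed ball of radius r about y₀ times N is contained in D, and for every y in the open ball of radius r/(1 + ε) about y₀ and every x ∈ N, there exists y_F in the closed ball of radius r about y₀ with F(y_F, x) = F¹(y, x) and ‖y_F − y‖ ≤ ε·‖y − y₀‖. -/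
open Filter Topology Set

open NNReal Metric

/-! Let `A₀ = D₁F(y₀, x₀)` and let `κ > 0` be the reciprocal of the norm of a (nonlinear) right
inverse of `A₀`, given by the open mapping theorem. By continuity of `D₁F`, for `(y, x)` near
`(y₀, x₀)` we have `‖D₁F(y, x) - A₀‖ ≤ c`, so each `F(·, x)` approximates `A₀` with constant `c`
on a small ball, and the quantitative surjectivity of such maps shows that `F(·, x)` maps
`closedBall y (ε‖y - y₀‖)` onto `closedBall (F(y, x)) ((κ - c) ε ‖y - y₀‖)`. The linearization
`F¹(y, x)` lies within `2c‖y - y₀‖` of `F(y, x)`, hence inside that ball once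
`2c ≤ (κ - c) ε`. -/

section PartialDerivative

variable {E X P : Type*} [NormedAddCommGroup E] [NormedSpace ℝ E] [NormedAddCommGroup X]
  [NormedSpace ℝ X] [NormedAddCommGroup P] [NormedSpace ℝ P] {F : E × X → P}

theorem D1_eq_fderiv_comp_inl {y : E} {x : X} (hF : DifferentiableAt ℝ F (y, x)) :
    D1 F y x = (fderiv ℝ F (y, x)).comp (ContinuousLinearMap.inl ℝ E X) :=
  (hF.hasFDerivAt.comp y (hasFDerivAt_prodMk_left (𝕜 := ℝ) y x)).fderiv

theorem hasFDerivAt_D1 {y : E} {x : X} (hF : DifferentiableAt ℝ F (y, x)) :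
    HasFDerivAt (fun y' => F (y', x)) (D1 F y x) y := by
  rw [D1_eq_fderiv_comp_inl hF]
  exact hF.hasFDerivAt.comp y (hasFDerivAt_prodMk_left (𝕜 := ℝ) y x)

variable {D : Set (E × X)}

theorem ContDiffOn.continuousOn_D1 (hF : ContDiffOn ℝ 1 F D) (hD : IsOpen D) :
    ContinuousOn (fun q : E × X => D1 F q.1 q.2) D :=
  ((hF.continuousOn_fderiv_of_isOpen hD le_rfl).clm_comp continuousOn_const).congr fun q hq =>
    D1_eq_fderiv_comp_inl ((hF.differentiableOn one_ne_zero q hq).differentiableAt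
      (hD.mem_nhds hq))

theorem ContDiffOn.exists_ball_norm_D1_sub_le (hF : ContDiffOn ℝ 1 F D) (hD : IsOpen D)
    {y₀ : E} {x₀ : X} (hmem : (y₀, x₀) ∈ D) {c : ℝ} (hc : 0 < c) :
    ∃ δ > 0, ball (y₀, x₀) δ ⊆ D ∧
      ∀ q ∈ ball (y₀, x₀) δ, ‖D1 F q.1 q.2 - D1 F y₀ x₀‖ ≤ c := by
  have hnear : ∀ᶠ q in 𝓝 (y₀, x₀), q ∈ D ∧ ‖D1 F q.1 q.2 - D1 F y₀ x₀‖ ≤ c := by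
    refine (hD.eventually_mem hmem).and ?_
    filter_upwards [((hF.continuousOn_D1 hD).continuousAt (hD.mem_nhds hmem)).eventually
      (closedBall_mem_nhds _ hc)] with q hq
    rwa [dist_eq_norm] at hq
  obtain ⟨δ, hδ, hball⟩ := eventually_nhds_iff_ball.1 hnear
  exact ⟨δ, hδ, fun q hq => (hball q hq).1, fun q hq => (hball q hq).2⟩

theorem Convex.approximatesLinearOn_of_hasFDerivWithinAt {f : E → P} {f' : E → E →L[ℝ] P}
    {A : E →L[ℝ] P} {s : Set E} {c : ℝ≥0} (hs : Convex ℝ s)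
    (hf : ∀ z ∈ s, HasFDerivWithinAt f (f' z) s z) (hc : ∀ z ∈ s, ‖f' z - A‖ ≤ c) :
    ApproximatesLinearOn f A s c :=
  fun _ ha _ hb => hs.norm_image_sub_le_of_norm_hasFDerivWithin_le' hf hc hb ha

theorem ContDiffOn.approximatesLinearOn_D1 (hF : ContDiffOn ℝ 1 F D) (hD : IsOpen D)
    {A : E →L[ℝ] P} {s : Set E} {c : ℝ≥0} {x : X} (hs : Convex ℝ s) (hsD : ∀ z ∈ s, (z, x) ∈ D)
    (hc : ∀ z ∈ s, ‖D1 F z x - A‖ ≤ c) :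
    ApproximatesLinearOn (fun y => F (y, x)) A s c :=
  hs.approximatesLinearOn_of_hasFDerivWithinAt (fun z hz => (hasFDerivAt_D1
    ((hF.differentiableOn one_ne_zero _ (hsD z hz)).differentiableAt
      (hD.mem_nhds (hsD z hz)))).hasFDerivWithinAt) hc

end PartialDerivative

namespace ApproximatesLinearOn

variable {E P : Type*} [NormedAddCommGroup E] [NormedSpace ℝ E] [NormedAddCommGroup P]
  [NormedSpace ℝ P] {f : E → P} {A B : E →L[ℝ] P} {s : Set E} {c : ℝ≥0}

theorem norm_linearization_sub_le (hf : ApproximatesLinearOn f A s c) (hB : ‖B - A‖ ≤ c)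
    {y₀ y : E} (hy₀ : y₀ ∈ s) (hy : y ∈ s) :
    ‖B (y - y₀) + f y₀ - f y‖ ≤ 2 * c * ‖y - y₀‖ := by
  have hBA : ‖(B - A) (y - y₀)‖ ≤ c * ‖y - y₀‖ :=
    ((B - A).le_opNorm _).trans (mul_le_mul_of_nonneg_right hB (norm_nonneg _))
  calc ‖B (y - y₀) + f y₀ - f y‖ = ‖(B - A) (y - y₀) - (f y - f y₀ - A (y - y₀))‖ := by
        congr 1; rw [sub_apply]; abel
    _ ≤ c * ‖y - y₀‖ + c * ‖y - y₀‖ := (norm_sub_le _ _).trans (add_le_add hBA (hf y hy y₀ hy₀))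
    _ = 2 * c * ‖y - y₀‖ := by ring

theorem exists_eq_linearization [CompleteSpace E] (A' : A.NonlinearRightInverse) {y₀ y : E}
    {r ε : ℝ} (hf : ApproximatesLinearOn f A (closedBall y₀ r) c) (hB : ‖B - A‖ ≤ c)
    (hc : 2 * c ≤ ((A'.nnnorm : ℝ)⁻¹ - c) * ε) (hε : 0 ≤ ε) (hy : y ∈ ball y₀ (r / (1 + ε))) :
    ∃ yF ∈ closedBall y₀ r, f yF = B (y - y₀) + f y₀ ∧ ‖yF - y‖ ≤ ε * ‖y - y₀‖ := by
  have hyr : (1 + ε) * ‖y - y₀‖ < r := by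
    rw [mem_ball_iff_norm, lt_div_iff₀ (by positivity)] at hy
    linarith
  have hsub : closedBall y (ε * ‖y - y₀‖) ⊆ closedBall y₀ r :=
    closedBall_subset_closedBall' (by rw [dist_eq_norm]; linarith)
  have hy_mem : y ∈ closedBall y₀ r := hsub (mem_closedBall_self (by positivity))
  have htarget : B (y - y₀) + f y₀ ∈
      closedBall (f y) (((A'.nnnorm : ℝ)⁻¹ - c) * (ε * ‖y - y₀‖)) := by
    rw [mem_closedBall_iff_norm, ← mul_assoc]
    exact (hf.norm_linearization_sub_le hB (mem_closedBall_self
      (dist_nonneg.trans hy_mem)) hy_mem).trans (mul_le_mul_of_nonneg_right hc (norm_nonneg _))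
  obtain ⟨yF, hyF, hfyF⟩ :=
    hf.surjOn_closedBall_of_nonlinearRightInverse A' (by positivity) hsub htarget
  exact ⟨yF, hsub hyF, hfyF, mem_closedBall_iff_norm.1 hyF⟩

end ApproximatesLinearOn

theorem closedBall_prod_ball_half_subset {α β : Type*} [PseudoMetricSpace α]
    [PseudoMetricSpace β] (a : α) (b : β) {δ : ℝ} (hδ : 0 < δ) :
    closedBall a (δ / 2) ×ˢ ball b (δ / 2) ⊆ ball (a, b) δ := by
  rw [← ball_prod_same]
  exact prod_mono (closedBall_subset_ball (half_lt_self hδ))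
    (ball_subset_ball (half_le_self hδ.le))

theorem stmt_10_general {E X P : Type*}
    [NormedAddCommGroup E] [NormedSpace ℝ E] [FiniteDimensional ℝ E]
    [NormedAddCommGroup X] [NormedSpace ℝ X]
    [NormedAddCommGroup P] [NormedSpace ℝ P] [FiniteDimensional ℝ P]
    (D : Set (E × X)) (hD : IsOpen D) (y₀ : E) (x₀ : X) (hmem : (y₀, x₀) ∈ D)
    (F : E × X → P) (hF : ContDiffOn ℝ 1 F D)
    (hsurj : Function.Surjective (D1 F y₀ x₀)) :
    ∀ ε > (0 : ℝ), ∃ r > (0 : ℝ), ∃ N ∈ 𝓝 x₀,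
      (Metric.closedBall y₀ r) ×ˢ N ⊆ D ∧
      ∀ y ∈ Metric.ball y₀ (r / (1 + ε)), ∀ x ∈ N,
        ∃ yF ∈ Metric.closedBall y₀ r,
          F (yF, x) = D1 F y₀ x (y - y₀) + F (y₀, x) ∧
          ‖yF - y‖ ≤ ε * ‖y - y₀‖ := by
  intro ε hε
  let A' := (D1 F y₀ x₀).nonlinearRightInverseOfSurjective (LinearMap.range_eq_top.2 hsurj)
  set κ : ℝ := (A'.nnnorm : ℝ)⁻¹
  have hκ : 0 < κ :=
    inv_pos.2 (mod_cast ContinuousLinearMap.nonlinearRightInverseOfSurjective_nnnorm_pos _ _)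
  -- this choice of `c` makes `2 * c = (κ - c) * ε`
  let c : ℝ≥0 := ⟨κ * ε / (2 + ε), by positivity⟩
  obtain ⟨δ, hδ, hδD, hδA⟩ := hF.exists_ball_norm_D1_sub_le hD hmem (c := c)
    (show 0 < κ * ε / (2 + ε) by positivity)
  have hsub := closedBall_prod_ball_half_subset y₀ x₀ hδ
  refine ⟨δ / 2, by positivity, ball x₀ (δ / 2), ball_mem_nhds _ (by positivity),
    hsub.trans hδD, fun y hy x hx => ?_⟩
  have hnear : ∀ z ∈ closedBall y₀ (δ / 2), (z, x) ∈ ball (y₀, x₀) δ := fun z hz => hsub ⟨hz, hx⟩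
  have happrox := hF.approximatesLinearOn_D1 hD (convex_closedBall y₀ (δ / 2))
    (fun z hz => hδD (hnear z hz)) (fun z hz => hδA (z, x) (hnear z hz))
  have hy₀ : ‖D1 F y₀ x - D1 F y₀ x₀‖ ≤ c :=
    hδA (y₀, x) (hnear y₀ (mem_closedBall_self (by positivity)))
  refine happrox.exists_eq_linearization A' hy₀ ?_ hε.le hy
  refine le_of_eq ?_
  show 2 * (κ * ε / (2 + ε)) = (κ - κ * ε / (2 + ε)) * ε
  field_simp
  ring

/-- Uniformly colocated level sets, part 2: for every `ε > 0` there are `r > 0` and a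
neighborhood `N` of `x₀` with `closedBall y₀ r × N ⊆ D`, such that every
`y ∈ ball y₀ (r/(1+ε))` and `x ∈ N` admit `y_F ∈ closedBall y₀ r` with
`F(y_F,x) = F¹(y,x)` and `‖y_F − y‖ ≤ ε·‖y − y₀‖`,
where `F¹(y,x) = D₁F(y₀,x)(y − y₀) + F(y₀,x)`. -/
theorem stmt_10 {E X P : Type*}
    [NormedAddCommGroup E] [NormedSpace ℝ E] [FiniteDimensional ℝ E]
    [NormedAddCommGroup X] [NormedSpace ℝ X] [FiniteDimensional ℝ X]
    [NormedAddCommGroup P] [NormedSpace ℝ P] [FiniteDimensional ℝ P]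
    (D : Set (E × X)) (hD : IsOpen D) (y₀ : E) (x₀ : X) (hmem : (y₀, x₀) ∈ D)
    (F : E × X → P) (hF : ContDiffOn ℝ 1 F D) (hF0 : F (y₀, x₀) = 0)
    (hsurj : Function.Surjective (D1 F y₀ x₀)) :
    ∀ ε > (0 : ℝ), ∃ r > (0 : ℝ), ∃ N ∈ 𝓝 x₀,
      (Metric.closedBall y₀ r) ×ˢ N ⊆ D ∧
      ∀ y ∈ Metric.ball y₀ (r / (1 + ε)), ∀ x ∈ N,
        ∃ yF ∈ Metric.closedBall y₀ r,
          F (yF, x) = D1 F y₀ x (y - y₀) + F (y₀, x) ∧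
          ‖yF - y‖ ≤ ε * ‖y - y₀‖ :=
  stmt_10_general D hD y₀ x₀ hmem F hF hsurj
end

section
/- (Second equivalence) There is a neighborhood of x₀ on which both μ₁ᵐᵃˣ(x) = max{f(F(y₀, x)) : f ∈ (ℝ^p)*, ‖D₁F(y₀, x)* f‖ ≤ 1} and μ₂ᵐᵃˣ(x) = max{f(F(y₀, x)) : f ∈ (ℝ^p)*, ‖D₁F(y₀, x₀)* f‖ ≤ 1} are well defined, and μ₁ᵐᵃˣ and μ₂ᵐᵃˣ are asymptotically equal at x₀. -/
open Filter Topology Set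

/-!
If `D₁F(y₀, x₀)` is onto, its adjoint is bounded below: `‖f‖ ≤ C ‖f ∘ D₁F(y₀, x₀)‖`. This survives
small perturbations, so by continuity of `D₁F` the adjoints of all `D₁F(y₀, x)` near `x₀` are
bounded below by `2C`; then the dual balls `{f | ‖f ∘ D₁F(y₀, x)‖ ≤ 1}` are compact, so both
maxima exist. A functional in one dual ball lies in the other one dilated by
`1 + 2C ‖D₁F(y₀, x) - D₁F(y₀, x₀)‖`, so each maximum is at most this factor times the other,
and the factor tends to `1` as `x → x₀`.
-/

section BoundedBelow

variable {𝕜 E P G : Type*} [NontriviallyNormedField 𝕜]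
  [NormedAddCommGroup E] [NormedSpace 𝕜 E] [NormedAddCommGroup P] [NormedSpace 𝕜 P]
  [NormedAddCommGroup G] [NormedSpace 𝕜 G]

theorem exists_norm_le_mul_norm_comp_of_surjective [CompleteSpace 𝕜] [FiniteDimensional 𝕜 P]
    (A : E →L[𝕜] P) (hA : Function.Surjective A) :
    ∃ C, 0 ≤ C ∧ ∀ f : P →L[𝕜] G, ‖f‖ ≤ C * ‖f.comp A‖ := by
  obtain ⟨g, hg⟩ := (A : E →ₗ[𝕜] P).exists_rightInverse_of_surjective (LinearMap.range_eq_top.2 hA)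
  let R : P →L[𝕜] E := LinearMap.toContinuousLinearMap g
  refine ⟨‖R‖, norm_nonneg _, fun f => ?_⟩
  have hf : f = (f.comp A).comp R := by
    ext v
    change f v = f ((A : E →ₗ[𝕜] P).comp g v)
    rw [hg, LinearMap.id_apply]
  calc ‖f‖ = ‖(f.comp A).comp R‖ := by rw [← hf]
    _ ≤ ‖R‖ * ‖f.comp A‖ := by rw [mul_comm]; exact (f.comp A).opNorm_comp_le R

theorem norm_comp_le_norm_comp_add (f : P →L[𝕜] G) (A B : E →L[𝕜] P) :
    ‖f.comp B‖ ≤ ‖f.comp A‖ + ‖f‖ * ‖A - B‖ := by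
  calc ‖f.comp B‖ = ‖f.comp A - f.comp (A - B)‖ := by
        rw [ContinuousLinearMap.comp_sub, sub_sub_cancel]
    _ ≤ ‖f.comp A‖ + ‖f.comp (A - B)‖ := norm_sub_le _ _
    _ ≤ ‖f.comp A‖ + ‖f‖ * ‖A - B‖ := by gcongr; exact f.opNorm_comp_le _

theorem norm_le_two_mul_norm_comp_of_norm_sub_le {A₀ A : E →L[𝕜] P} {C : ℝ} (hC₀ : 0 ≤ C)
    (hC : ∀ f : P →L[𝕜] G, ‖f‖ ≤ C * ‖f.comp A₀‖) (hA : C * ‖A₀ - A‖ ≤ 1 / 2)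
    (f : P →L[𝕜] G) : ‖f‖ ≤ 2 * C * ‖f.comp A‖ := by
  have h := norm_comp_le_norm_comp_add f A A₀
  rw [norm_sub_rev] at h
  have hhalf : ‖f‖ ≤ C * ‖f.comp A‖ + 1 / 2 * ‖f‖ :=
    calc ‖f‖ ≤ C * ‖f.comp A₀‖ := hC f
      _ ≤ C * (‖f.comp A‖ + ‖f‖ * ‖A₀ - A‖) := by gcongr
      _ = C * ‖f.comp A‖ + C * ‖A₀ - A‖ * ‖f‖ := by ring
      _ ≤ C * ‖f.comp A‖ + 1 / 2 * ‖f‖ := by gcongr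
  linarith

end BoundedBelow

section DualMax

variable {E P : Type*} [NormedAddCommGroup E] [NormedSpace ℝ E]
  [NormedAddCommGroup P] [NormedSpace ℝ P]

def dualBallValues (A : E →L[ℝ] P) (v : P) : Set ℝ :=
  {r | ∃ f : P →L[ℝ] ℝ, ‖f.comp A‖ ≤ 1 ∧ r = f v}

noncomputable def dualMax (A : E →L[ℝ] P) (v : P) : ℝ :=
  sSup (dualBallValues A v)

theorem zero_mem_dualBallValues (A : E →L[ℝ] P) (v : P) : 0 ∈ dualBallValues A v :=
  ⟨0, by simp⟩

theorem dualMax_nonneg {A : E →L[ℝ] P} {v : P} (h : BddAbove (dualBallValues A v)) :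
    0 ≤ dualMax A v :=
  le_csSup h (zero_mem_dualBallValues A v)

theorem isGreatest_dualMax [FiniteDimensional ℝ P] {A : E →L[ℝ] P} {K : ℝ}
    (hK : ∀ f : P →L[ℝ] ℝ, ‖f‖ ≤ K * ‖f.comp A‖) (v : P) :
    IsGreatest (dualBallValues A v) (dualMax A v) := by
  have hball : IsCompact {f : P →L[ℝ] ℝ | ‖f.comp A‖ ≤ 1} := by
    refine Metric.isCompact_of_isClosed_isBounded ?_ ?_
    · exact isClosed_le (((ContinuousLinearMap.compL ℝ E P ℝ).flip A).continuous.norm)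
        continuous_const
    · refine (Metric.isBounded_closedBall (x := 0) (r := |K|)).subset fun f hf => ?_
      rw [Metric.mem_closedBall, dist_zero_right]
      calc ‖f‖ ≤ K * ‖f.comp A‖ := hK f
        _ ≤ |K| * ‖f.comp A‖ := by gcongr; exact le_abs_self K
        _ ≤ |K| := mul_le_of_le_one_right (abs_nonneg K) hf
  have himage : dualBallValues A v = (fun f : P →L[ℝ] ℝ => f v) '' {f | ‖f.comp A‖ ≤ 1} := by
    ext r
    simp [dualBallValues, eq_comm]
  rw [dualMax, himage]
  exact (hball.image (ContinuousLinearMap.apply ℝ ℝ v).continuous).isGreatest_sSup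
    ⟨0, 0, by simp⟩

theorem le_mul_dualMax {B : E →L[ℝ] P} {v : P} (hB : BddAbove (dualBallValues B v))
    {f : P →L[ℝ] ℝ} {s : ℝ} (hs : 0 < s) (hf : ‖f.comp B‖ ≤ s) : f v ≤ s * dualMax B v := by
  have hmem : s⁻¹ * f v ∈ dualBallValues B v := by
    refine ⟨s⁻¹ • f, ?_, by simp⟩
    rw [ContinuousLinearMap.smul_comp, norm_smul, Real.norm_of_nonneg (inv_nonneg.2 hs.le)]
    exact inv_mul_le_one_of_le₀ hf hs.le
  have := le_csSup hB hmem
  rwa [inv_mul_le_iff₀ hs] at this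

theorem dualMax_le_one_add_mul_dualMax {A B : E →L[ℝ] P} {K : ℝ} (hK₀ : 0 ≤ K)
    (hK : ∀ f : P →L[ℝ] ℝ, ‖f‖ ≤ K * ‖f.comp A‖) {v : P} (hB : BddAbove (dualBallValues B v)) :
    dualMax A v ≤ (1 + K * ‖A - B‖) * dualMax B v := by
  refine csSup_le ⟨0, zero_mem_dualBallValues A v⟩ ?_
  rintro _ ⟨f, hf, rfl⟩
  refine le_mul_dualMax hB (by positivity) ?_
  have hfK : ‖f‖ ≤ K := by nlinarith [hK f, norm_nonneg (f.comp A)]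
  calc ‖f.comp B‖ ≤ ‖f.comp A‖ + ‖f‖ * ‖A - B‖ := norm_comp_le_norm_comp_add f A B
    _ ≤ 1 + K * ‖A - B‖ := by gcongr

end DualMax

theorem asympEq_of_eventually_le_one_add_mul {X : Type*} [TopologicalSpace X] {x₀ : X}
    {f g η : X → ℝ} (hη : Tendsto η (𝓝 x₀) (𝓝 0))
    (h : ∀ᶠ x in 𝓝 x₀, 0 ≤ f x ∧ 0 ≤ g x ∧ f x ≤ (1 + η x) * g x ∧ g x ≤ (1 + η x) * f x) :
    AsympEq x₀ f g := by
  intro ε hε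
  refine ⟨_, h.and (hη.eventually (gt_mem_nhds hε)), fun x ⟨⟨hf, hg, hfg, hgf⟩, hηε⟩ => ⟨?_, ?_⟩⟩
  · rcases le_or_gt 1 ε with h1 | h1
    · nlinarith
    · have h1ε : 0 ≤ 1 - ε := by linarith
      have hεη : 0 ≤ ε - η x := by linarith
      calc (1 - ε) * g x ≤ (1 - ε) * ((1 + η x) * f x) := by gcongr
        _ ≤ f x := by nlinarith [mul_nonneg hf (mul_nonneg hεη h1ε), mul_nonneg hf (sq_nonneg ε)]
  · calc f x ≤ (1 + η x) * g x := hfg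
      _ ≤ (1 + ε) * g x := by gcongr

theorem continuousAt_D1 {E X P : Type*} [NormedAddCommGroup E] [NormedSpace ℝ E]
    [NormedAddCommGroup X] [NormedSpace ℝ X] [NormedAddCommGroup P] [NormedSpace ℝ P]
    {D : Set (E × X)} (hD : IsOpen D) {F : E × X → P} (hF : ContDiffOn ℝ 1 F D) {y : E} {x : X}
    (hmem : (y, x) ∈ D) : ContinuousAt (D1 F y) x := by
  have hslice : Continuous fun x' : X => (y, x') := Continuous.prodMk_right y
  have hcomp : ContinuousAt (fun x' => (fderiv ℝ F (y, x')).comp (ContinuousLinearMap.inl ℝ E X)) x :=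
    ((ContinuousLinearMap.compL ℝ E (E × X) P).flip _).continuous.continuousAt.comp
      ((hF.continuousOn_fderiv_of_isOpen hD le_rfl).continuousAt (hD.mem_nhds hmem)
        |>.comp hslice.continuousAt)
  refine hcomp.congr ?_
  filter_upwards [(hD.preimage hslice).mem_nhds hmem] with x' hx'
  have hdiff : DifferentiableAt ℝ F (y, x') :=
    (hF.differentiableOn one_ne_zero).differentiableAt (hD.mem_nhds hx')
  exact (hdiff.hasFDerivAt.comp y (hasFDerivAt_prodMk_left y x')).fderiv.symm

theorem stmt_16_general {E X P : Type*}
    [NormedAddCommGroup E] [NormedSpace ℝ E]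
    [NormedAddCommGroup X] [NormedSpace ℝ X]
    [NormedAddCommGroup P] [NormedSpace ℝ P] [FiniteDimensional ℝ P]
    (D : Set (E × X)) (hD : IsOpen D) (y₀ : E) (x₀ : X) (hmem : (y₀, x₀) ∈ D)
    (F : E × X → P) (hF : ContDiffOn ℝ 1 F D)
    (hsurj : Function.Surjective (D1 F y₀ x₀)) :
    ∃ N ∈ 𝓝 x₀, ∃ μ₁ μ₂ : X → ℝ,
      (∀ x ∈ N,
        IsGreatest {r : ℝ | ∃ f : P →L[ℝ] ℝ,
          ‖f.comp (D1 F y₀ x)‖ ≤ 1 ∧ r = f (F (y₀, x))} (μ₁ x) ∧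
        IsGreatest {r : ℝ | ∃ f : P →L[ℝ] ℝ,
          ‖f.comp (D1 F y₀ x₀)‖ ≤ 1 ∧ r = f (F (y₀, x))} (μ₂ x)) ∧
      AsympEq x₀ μ₁ μ₂ := by
  obtain ⟨C, hC₀, hC⟩ := exists_norm_le_mul_norm_comp_of_surjective (G := ℝ) _ hsurj
  have hδ : Tendsto (fun x => ‖D1 F y₀ x₀ - D1 F y₀ x‖) (𝓝 x₀) (𝓝 0) := by
    simpa [norm_sub_rev] using tendsto_iff_norm_sub_tendsto_zero.1 (continuousAt_D1 hD hF hmem)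
  have hK : ∀ᶠ x in 𝓝 x₀, ∀ f : P →L[ℝ] ℝ, ‖f‖ ≤ 2 * C * ‖f.comp (D1 F y₀ x)‖ := by
    have hsmall := (hδ.const_mul C).eventually (ge_mem_nhds (by norm_num : C * 0 < 1 / 2))
    exact hsmall.mono fun x hx => norm_le_two_mul_norm_comp_of_norm_sub_le hC₀ hC hx
  have hK₀ := hK.self_of_nhds
  refine ⟨_, hK, fun x => dualMax (D1 F y₀ x) (F (y₀, x)),
    fun x => dualMax (D1 F y₀ x₀) (F (y₀, x)),
    fun x hx => ⟨isGreatest_dualMax hx _, isGreatest_dualMax hK₀ _⟩, ?_⟩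
  refine asympEq_of_eventually_le_one_add_mul
    (η := fun x => 2 * C * ‖D1 F y₀ x₀ - D1 F y₀ x‖) (by simpa using hδ.const_mul (2 * C)) ?_
  filter_upwards [hK] with x hx
  have h₁ := (isGreatest_dualMax hx (F (y₀, x))).bddAbove
  have h₂ := (isGreatest_dualMax hK₀ (F (y₀, x))).bddAbove
  refine ⟨dualMax_nonneg h₁, dualMax_nonneg h₂, ?_, ?_⟩
  · simpa [norm_sub_rev] using dualMax_le_one_add_mul_dualMax (by positivity) hx h₂
  · exact dualMax_le_one_add_mul_dualMax (by positivity) hK₀ h₁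

/-- Second equivalence: on a neighborhood of `x₀` the dual values
`μ₁ᵐᵃˣ(x) = max {f(F(y₀,x)) : ‖D₁F(y₀,x)* f‖ ≤ 1}` and
`μ₂ᵐᵃˣ(x) = max {f(F(y₀,x)) : ‖D₁F(y₀,x₀)* f‖ ≤ 1}` are well defined, and they are
asymptotically equal at `x₀`. -/
theorem stmt_16 {E X P : Type*}
    [NormedAddCommGroup E] [NormedSpace ℝ E] [FiniteDimensional ℝ E]
    [NormedAddCommGroup X] [NormedSpace ℝ X] [FiniteDimensional ℝ X]
    [NormedAddCommGroup P] [NormedSpace ℝ P] [FiniteDimensional ℝ P]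
    (D : Set (E × X)) (hD : IsOpen D) (y₀ : E) (x₀ : X) (hmem : (y₀, x₀) ∈ D)
    (F : E × X → P) (hF : ContDiffOn ℝ 1 F D) (hF0 : F (y₀, x₀) = 0)
    (hsurj : Function.Surjective (D1 F y₀ x₀)) :
    ∃ N ∈ 𝓝 x₀, ∃ μ₁ μ₂ : X → ℝ,
      (∀ x ∈ N,
        IsGreatest {r : ℝ | ∃ f : P →L[ℝ] ℝ,
          ‖f.comp (D1 F y₀ x)‖ ≤ 1 ∧ r = f (F (y₀, x))} (μ₁ x) ∧
        IsGreatest {r : ℝ | ∃ f : P →L[ℝ] ℝ,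
          ‖f.comp (D1 F y₀ x₀)‖ ≤ 1 ∧ r = f (F (y₀, x))} (μ₂ x)) ∧
      AsympEq x₀ μ₁ μ₂ :=
  stmt_16_general D hD y₀ x₀ hmem F hF hsurj
end
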